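/- Extension by a finite set preserves 𝒯-least generating sets: let 𝒯 be E-closed, 𝒯'₀ a 𝒯-relatively generating set for an E-closed set 𝒯₀, and 𝒯_f a finite set of theories disjoint from 𝒯₀. Then 𝒯'₀ is the 𝒯-least generating set for 𝒯₀ if and only if 𝒯'₀ ∪ (𝒯_f \ 𝒯₀) is the 𝒯-least generating set for the E-closed set 𝒯₀ ∪ 𝒯_f. -/
import Mathlib


open Set

variable {Sentence : Type*}

/-- The set `𝒯_φ` of theories in `𝒯` containing the sentence `φ`. -/
def setAt (𝒯 : Set (Set Sentence)) (φ : Sentence) : Set (Set Sentence) :=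
  {T ∈ 𝒯 | φ ∈ T}

/-- The E-closure of a set of theories, relative to the predicate `isTh` of
being a theory: `𝒯` together with all theories `T` such that every sentence
of `T` belongs to infinitely many members of `𝒯`. -/
def ClE (isTh : Set Sentence → Prop) (𝒯 : Set (Set Sentence)) : Set (Set Sentence) :=
  𝒯 ∪ {T | isTh T ∧ ∀ φ ∈ T, (setAt 𝒯 φ).Infinite}

/-- `𝒢` is a `𝒯`-relatively generating set for `𝒯₀`. -/
def IsRelGen (isTh : Set Sentence → Prop) (𝒯 𝒯₀ 𝒢 : Set (Set Sentence)) : Prop :=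
  𝒢 ⊆ 𝒯₀ ∧ ClE isTh 𝒢 \ 𝒯 = 𝒯₀ \ 𝒯

/-- `𝒢` is the `𝒯`-least generating set for `𝒯₀`. -/
def IsLeastRelGen (isTh : Set Sentence → Prop) (𝒯 𝒯₀ 𝒢 : Set (Set Sentence)) : Prop :=
  IsRelGen isTh 𝒯 𝒯₀ 𝒢 ∧
    ∀ 𝒢' : Set (Set Sentence), IsRelGen isTh 𝒯 𝒯₀ 𝒢' → 𝒢 \ 𝒯 ⊆ 𝒢' \ 𝒯


section Aux

variable {isTh : Set Sentence → Prop}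

lemma setAt_mono {A B : Set (Set Sentence)} (h : A ⊆ B) (φ : Sentence) :
    setAt A φ ⊆ setAt B φ := fun T hT => ⟨h hT.1, hT.2⟩

lemma setAt_union (A B : Set (Set Sentence)) (φ : Sentence) :
    setAt (A ∪ B) φ = setAt A φ ∪ setAt B φ := by
  ext T; simp only [setAt, mem_union, mem_setOf_eq, mem_sep_iff]; tauto

lemma setAt_subset (A : Set (Set Sentence)) (φ : Sentence) :
    setAt A φ ⊆ A := fun T hT => hT.1

lemma ClE_mono {A B : Set (Set Sentence)} (h : A ⊆ B) :
    ClE isTh A ⊆ ClE isTh B := by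
  rintro T (hT | ⟨h1, h2⟩)
  · exact Or.inl (h hT)
  · exact Or.inr ⟨h1, fun φ hφ => (h2 φ hφ).mono (setAt_mono h φ)⟩

lemma ClE_union_finite {F : Set (Set Sentence)} (hF : F.Finite)
    (A : Set (Set Sentence)) :
    ClE isTh (A ∪ F) = ClE isTh A ∪ F := by
  ext T
  constructor
  · rintro ((hT | hT) | ⟨h1, h2⟩)
    · exact Or.inl (Or.inl hT)
    · exact Or.inr hT
    · refine Or.inl (Or.inr ⟨h1, fun φ hφ => ?_⟩)
      have h3 := h2 φ hφ
      rw [setAt_union] at h3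
      exact ((Set.infinite_union).mp h3).resolve_right
        (fun h => h (hF.subset (setAt_subset F φ)))
  · rintro (hT | hT)
    · exact ClE_mono subset_union_left hT
    · exact Or.inl (Or.inr hT)

end Aux

/-- Extension by a finite set disjoint from `𝒯₀` preserves `𝒯`-least
generating sets. -/
theorem least_relGen_union_finite
    (conj : Sentence → Sentence → Sentence) (neg : Sentence → Sentence)
    (isTh : Set Sentence → Prop)
    (hne : ∀ T, isTh T → T.Nonempty)
    (hconj : ∀ T, isTh T → ∀ φ ψ : Sentence, conj φ ψ ∈ T ↔ φ ∈ T ∧ ψ ∈ T)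
    (hcomp : ∀ T, isTh T → ∀ φ : Sentence, φ ∈ T ↔ neg φ ∉ T)
    (hsep : ∀ T₀ T₁ : Set Sentence, isTh T₀ → isTh T₁ → T₀ ≠ T₁ →
      ∃ φ : Sentence, φ ∈ T₀ ∧ φ ∉ T₁)
    (𝒯 𝒯₀ 𝒯'₀ 𝒯f : Set (Set Sentence))
    (h𝒯 : ∀ T ∈ 𝒯, isTh T) (h𝒯₀ : ∀ T ∈ 𝒯₀, isTh T) (h𝒯f : ∀ T ∈ 𝒯f, isTh T)
    (hTclosed : ClE isTh 𝒯 = 𝒯) (h𝒯₀closed : ClE isTh 𝒯₀ = 𝒯₀)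
    (hrelgen : IsRelGen isTh 𝒯 𝒯₀ 𝒯'₀)
    (hfin : 𝒯f.Finite) (hdisj : Disjoint 𝒯f 𝒯₀) :
    ClE isTh (𝒯₀ ∪ 𝒯f) = 𝒯₀ ∪ 𝒯f ∧
      (IsLeastRelGen isTh 𝒯 𝒯₀ 𝒯'₀ ↔
        IsLeastRelGen isTh 𝒯 (𝒯₀ ∪ 𝒯f) (𝒯'₀ ∪ (𝒯f \ 𝒯₀))) := by

  have hFeq : 𝒯f \ 𝒯₀ = 𝒯f := hdisj.sdiff_eq_left
  rw [hFeq]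
  have hclosed : ClE isTh (𝒯₀ ∪ 𝒯f) = 𝒯₀ ∪ 𝒯f := by
    rw [ClE_union_finite hfin, h𝒯₀closed]
  -- extending a relgen for 𝒯₀ to one for 𝒯₀ ∪ 𝒯f
  have hext : ∀ 𝒢, IsRelGen isTh 𝒯 𝒯₀ 𝒢 → IsRelGen isTh 𝒯 (𝒯₀ ∪ 𝒯f) (𝒢 ∪ 𝒯f) := by
    rintro 𝒢 ⟨hsub, hgen⟩
    refine ⟨union_subset_union hsub (subset_refl _), ?_⟩
    rw [ClE_union_finite hfin, union_diff_distrib, hgen, ← union_diff_distrib]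
  -- restricting a relgen for 𝒯₀ ∪ 𝒯f
  have hrestr : ∀ 𝒢', IsRelGen isTh 𝒯 (𝒯₀ ∪ 𝒯f) 𝒢' →
      IsRelGen isTh 𝒯 𝒯₀ (𝒢' ∩ 𝒯₀) ∧ 𝒯f \ 𝒯 ⊆ 𝒢' := by
    rintro 𝒢' ⟨hsub, hgen⟩
    have transfer : ∀ φ, (setAt 𝒢' φ).Infinite → (setAt (𝒢' ∩ 𝒯₀) φ).Infinite := by
      intro φ h
      refine (h.diff hfin).mono ?_
      rintro S ⟨⟨hS𝒢, hSφ⟩, hSf⟩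
      exact ⟨⟨hS𝒢, (hsub hS𝒢).resolve_right hSf⟩, hSφ⟩
    have key : ∀ T, isTh T → (∀ φ ∈ T, (setAt 𝒢' φ).Infinite) → T ∈ 𝒯₀ := by
      intro T hT h
      have h1 : T ∈ ClE isTh (𝒢' ∩ 𝒯₀) :=
        Or.inr ⟨hT, fun φ hφ => transfer φ (h φ hφ)⟩
      have h2 : T ∈ ClE isTh 𝒯₀ := ClE_mono inter_subset_right h1
      rwa [h𝒯₀closed] at h2
    constructor
    · refine ⟨inter_subset_right, Set.Subset.antisymm ?_ ?_⟩
      · intro T hT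
        have h2 : T ∈ ClE isTh 𝒯₀ := ClE_mono inter_subset_right hT.1
        rw [h𝒯₀closed] at h2
        exact ⟨h2, hT.2⟩
      · intro T hT
        have hT' : T ∈ ClE isTh 𝒢' \ 𝒯 := by
          rw [hgen]; exact ⟨Or.inl hT.1, hT.2⟩
        rcases hT'.1 with h | ⟨h1, h2⟩
        · exact ⟨Or.inl ⟨h, hT.1⟩, hT.2⟩
        · exact ⟨Or.inr ⟨h1, fun φ hφ => transfer φ (h2 φ hφ)⟩, hT.2⟩
    · intro T hT
      have hT' : T ∈ ClE isTh 𝒢' \ 𝒯 := by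
        rw [hgen]; exact ⟨Or.inr hT.1, hT.2⟩
      rcases hT'.1 with h | ⟨h1, h2⟩
      · exact h
      · exact absurd (key T h1 h2) (disjoint_left.mp hdisj hT.1)
  refine ⟨hclosed, ?_, ?_⟩
  · rintro ⟨_, hleast⟩
    refine ⟨hext 𝒯'₀ hrelgen, ?_⟩
    intro 𝒢' h𝒢'
    obtain ⟨hres, hfsub⟩ := hrestr 𝒢' h𝒢'
    rw [union_diff_distrib]
    refine union_subset ?_ ?_
    · exact (hleast (𝒢' ∩ 𝒯₀) hres).trans
        (diff_subset_diff_left inter_subset_left)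
    · exact fun T hT => ⟨hfsub hT, hT.2⟩
  · rintro ⟨_, hleast⟩
    refine ⟨hrelgen, ?_⟩
    intro 𝒢' h𝒢'
    have h1 := hleast (𝒢' ∪ 𝒯f) (hext 𝒢' h𝒢')
    intro T hT
    have h2 : T ∈ (𝒢' ∪ 𝒯f) \ 𝒯 := h1 ⟨Or.inl hT.1, hT.2⟩
    refine ⟨h2.1.resolve_right (fun hf => ?_), hT.2⟩
    exact disjoint_left.mp hdisj hf (hrelgen.1 hT.1)
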